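/- arXiv:1412.2223 — 3 statements merged into one kernel-verified Lean document; each statement's English description precedes it below -/
import Mathlib

section
/- In the slim topology on R_L, the Λ-limit of a function λ ↦ (λ, φ(λ)) is unique, and two functions φ, ψ : L → ℝ have the same Λ-limit if and only if {λ ∈ L : φ(λ) = ψ(λ)} ∈ U. -/
/-! Every point of `L × ℝ` is isolated. The germs `[φ] ≠ [ψ]` are separated by `N_{φ,Q}` and
`N_{ψ,Q}` with `Q = {φ ≠ ψ} ∈ U`, and `[φ]` is separated from `(λ, r)` by `N_{φ, L \ {λ}}`, where
`L \ {λ} ∈ U` because `U` is free. Hence `τ_U` is Hausdorff and Λ-limits are unique. The graph of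
`φ` tends to `[φ]`, since a basic neighbourhood `N_{ψ,Q}` of `[φ]` has `ψ = φ` on a set of `U`;
so `φ` and `ψ` have the same Λ-limit iff `[φ] = [ψ]` in the ultrapower. -/

open Filter Set

variable (L : Type) (U : Ultrafilter L)

/-- The underlying set `R_L = (L × ℝ) ⊎ K`, where `K = F(L,ℝ)/I` is realized as the
ultrapower `Filter.Germ ↑U ℝ` (the quotient of `L → ℝ` by equality on a set of `U`). -/
def RL := (L × ℝ) ⊕ Filter.Germ (U : Filter L) ℝ

/-- The basic neighborhood `N_{φ,Q} = {(λ, φ(λ)) : λ ∈ Q} ∪ {[φ]_I}`. -/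
def Nset (φ : L → ℝ) (Q : Set L) : Set (RL L U) :=
  (Sum.inl '' ((fun l => (l, φ l)) '' Q)) ∪ {Sum.inr (φ : Filter.Germ (U : Filter L) ℝ)}

/-- The basis `b(τ) = {N_{φ,Q} : φ ∈ F(L,ℝ), Q ∈ U} ∪ P(L × ℝ)`. -/
def slimBasis : Set (Set (RL L U)) :=
  {S | ∃ φ : L → ℝ, ∃ Q ∈ U, S = Nset L U φ Q} ∪ {S | ∃ A : Set (L × ℝ), S = Sum.inl '' A}

def slimTop : TopologicalSpace (RL L U) := TopologicalSpace.generateFrom (slimBasis L U)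

theorem Ultrafilter.compl_singleton_mem_of_ne_pure {α : Type*} {f : Ultrafilter α} {a : α}
    (h : (f : Filter α) ≠ pure a) : {a}ᶜ ∈ f :=
  f.compl_mem_iff_notMem.2 fun ha => h (f.neBot.eq_pure_iff.2 ha)

section SlimTopology

open Topology

variable {L U}

-- The topology is passed explicitly: `(Sum.inl p : RL L U)` elaborates to a term of the
-- unfolded type `L × ℝ ⊕ Germ ↑U ℝ`, on which instance search would find nothing.
local notation "𝓝ₛ" => @nhds (RL _ _) (slimTop _ _)

lemma inl_mem_Nset_iff {φ : L → ℝ} {Q : Set L} {p : L × ℝ} :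
    (Sum.inl p : RL L U) ∈ Nset L U φ Q ↔ p.1 ∈ Q ∧ φ p.1 = p.2 := by
  obtain ⟨a, r⟩ := p
  unfold Nset RL
  simp

lemma inr_mem_Nset_iff {φ : L → ℝ} {Q : Set L} {g : Germ (U : Filter L) ℝ} :
    (Sum.inr g : RL L U) ∈ Nset L U φ Q ↔ g = φ := by
  unfold Nset RL
  simp

lemma image_inl_mem_nhds {A : Set (L × ℝ)} {p : L × ℝ} (hp : p ∈ A) :
    (Sum.inl '' A : Set (RL L U)) ∈ 𝓝ₛ (Sum.inl p) :=
  @IsOpen.mem_nhds _ (slimTop L U) _ _ (.basic _ (Or.inr ⟨A, rfl⟩)) (mem_image_of_mem _ hp)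

lemma Nset_mem_nhds (φ : L → ℝ) {Q : Set L} (hQ : Q ∈ U) :
    Nset L U φ Q ∈ 𝓝ₛ (Sum.inr (φ : Germ (U : Filter L) ℝ)) :=
  @IsOpen.mem_nhds _ (slimTop L U) _ _ (.basic _ (Or.inl ⟨φ, Q, hQ, rfl⟩))
    (inr_mem_Nset_iff.2 rfl)

lemma disjoint_nhds_inl_inl {p q : L × ℝ} (h : p ≠ q) :
    Disjoint (𝓝ₛ (Sum.inl p : RL L U)) (𝓝ₛ (Sum.inl q)) :=
  Filter.disjoint_iff.2 ⟨_, image_inl_mem_nhds (mem_singleton p), _,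
    image_inl_mem_nhds (mem_singleton q), Set.disjoint_left.2 <| by
      rintro _ ⟨_, rfl, rfl⟩ ⟨_, rfl, hq⟩
      exact h (Sum.inl_injective hq).symm⟩

lemma disjoint_nhds_inl_inr {p : L × ℝ} (hp : (U : Filter L) ≠ pure p.1) (φ : L → ℝ) :
    Disjoint (𝓝ₛ (Sum.inl p : RL L U)) (𝓝ₛ (Sum.inr (φ : Germ (U : Filter L) ℝ))) := by
  refine Filter.disjoint_iff.2 ⟨_, image_inl_mem_nhds (mem_singleton p), _,
    Nset_mem_nhds φ (Ultrafilter.compl_singleton_mem_of_ne_pure hp), Set.disjoint_left.2 ?_⟩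
  rintro _ ⟨q, rfl, rfl⟩ h
  exact (inl_mem_Nset_iff.1 h).1 rfl

lemma disjoint_nhds_inr_inr {φ ψ : L → ℝ}
    (h : (φ : Germ (U : Filter L) ℝ) ≠ ψ) :
    Disjoint (𝓝ₛ (Sum.inr (φ : Germ (U : Filter L) ℝ) : RL L U))
      (𝓝ₛ (Sum.inr (ψ : Germ _ ℝ))) := by
  have hQ : {l | φ l = ψ l}ᶜ ∈ U := U.compl_mem_iff_notMem.2 fun h' => h (Germ.coe_eq.2 h')
  refine Filter.disjoint_iff.2
    ⟨_, Nset_mem_nhds φ hQ, _, Nset_mem_nhds ψ hQ, Set.disjoint_left.2 ?_⟩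
  rintro (p | g) hφ hψ
  · obtain ⟨hp, hφp⟩ := inl_mem_Nset_iff.1 hφ
    exact hp (hφp.trans (inl_mem_Nset_iff.1 hψ).2.symm)
  · exact h ((inr_mem_Nset_iff.1 hφ).symm.trans (inr_mem_Nset_iff.1 hψ))

lemma t2Space_slimTop (hfree : ∀ x : L, (U : Filter L) ≠ pure x) :
    @T2Space (RL L U) (slimTop L U) := by
  refine @t2Space_iff_disjoint_nhds _ (slimTop L U) |>.2 ?_
  rintro (p | g) (q | g') hne
  · exact disjoint_nhds_inl_inl fun h => hne (congrArg _ h)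
  · induction g' using Germ.inductionOn with | h ψ => exact disjoint_nhds_inl_inr (hfree p.1) ψ
  · induction g using Germ.inductionOn with
    | h φ => exact (disjoint_nhds_inl_inr (hfree q.1) φ).symm
  · induction g using Germ.inductionOn with | h φ =>
    induction g' using Germ.inductionOn with | h ψ =>
    exact disjoint_nhds_inr_inr fun h => hne (congrArg _ h)

lemma tendsto_graph_nhds_germ (φ : L → ℝ) :
    Tendsto (fun l => (Sum.inl (l, φ l) : RL L U)) (U : Filter L)
      (𝓝ₛ (Sum.inr (φ : Germ (U : Filter L) ℝ))) := by
  refine TopologicalSpace.tendsto_nhds_generateFrom_iff.2 ?_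
  rintro s (⟨ψ, Q, hQ, rfl⟩ | ⟨A, rfl⟩) hs
  · have hφψ : ∀ᶠ l in (U : Filter L), φ l = ψ l := Germ.coe_eq.1 (inr_mem_Nset_iff.1 hs)
    filter_upwards [hQ, hφψ] with l hl he
    exact inl_mem_Nset_iff.2 ⟨hl, he.symm⟩
  · obtain ⟨_, _, h⟩ := hs
    exact absurd h Sum.inl_ne_inr

lemma eq_inr_germ_of_tendsto_graph (hfree : ∀ x : L, (U : Filter L) ≠ pure x) {φ : L → ℝ}
    {x : RL L U} (h : Tendsto (fun l => (Sum.inl (l, φ l) : RL L U)) (U : Filter L) (𝓝ₛ x)) :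
    x = Sum.inr (φ : Germ (U : Filter L) ℝ) :=
  @tendsto_nhds_unique (RL L U) L (slimTop L U) (t2Space_slimTop hfree) _ _ _ _ _ h
    (tendsto_graph_nhds_germ φ)

end SlimTopology

/-- in the slim topology, Λ-limits are unique, and two functions
`φ, ψ : L → ℝ` have the same Λ-limit iff `{λ : φ(λ) = ψ(λ)} ∈ U`. -/
theorem stmt5 (hfree : ∀ x : L, (U : Filter L) ≠ pure x) :
    (∀ (f : L → RL L U) (x y : RL L U),
        Filter.Tendsto f (U : Filter L) (@nhds (RL L U) (slimTop L U) x) →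
        Filter.Tendsto f (U : Filter L) (@nhds (RL L U) (slimTop L U) y) → x = y) ∧
    (∀ φ ψ : L → ℝ,
        (∃ x : RL L U,
            Filter.Tendsto (fun l => (Sum.inl (l, φ l) : RL L U)) (U : Filter L)
              (@nhds (RL L U) (slimTop L U) x) ∧
            Filter.Tendsto (fun l => (Sum.inl (l, ψ l) : RL L U)) (U : Filter L)
              (@nhds (RL L U) (slimTop L U) x)) ↔
          {l : L | φ l = ψ l} ∈ U) := by
  let _ := slimTop L U
  have := t2Space_slimTop hfree
  refine ⟨fun f x y => tendsto_nhds_unique, fun φ ψ => ⟨?_, fun h => ?_⟩⟩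
  · rintro ⟨x, hφ, hψ⟩
    exact Germ.coe_eq.1 <| Sum.inr_injective <|
      (eq_inr_germ_of_tendsto_graph hfree hφ).symm.trans (eq_inr_germ_of_tendsto_graph hfree hψ)
  · refine ⟨_, tendsto_graph_nhds_germ φ, ?_⟩
    rw [Germ.coe_eq.2 h]
    exact tendsto_graph_nhds_germ ψ
end

section
/- The slim topology τ_U is finer than any topology τ that makes (L × ℝ) ⊎ ℝ^L/U into an (L,U)-completion of ℝ: every τ-open set is τ_U-open. -/
open Filter Set

variable (L : Type) (U : Ultrafilter L)

/-!
Points of `L × ℝ` are isolated in `τ_U`. A `τ`-open set containing `[φ]_U` contains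
`(λ, φ λ)` for `U`-almost every `λ`, because `λ ↦ (λ, φ λ)` converges to `[φ]_U`; the set `Q`
of those `λ` gives a basic `τ_U`-neighbourhood `N_{φ,Q}` inside the open set.
-/

section

open Topology

variable {L U}

theorem isOpen_slimTop_image_inl (A : Set (L × ℝ)) :
    IsOpen[slimTop L U] (Sum.inl '' A : Set (RL L U)) :=
  TopologicalSpace.GenerateOpen.basic _ (Or.inr ⟨A, rfl⟩)

theorem isOpen_slimTop_Nset (φ : L → ℝ) {Q : Set L} (hQ : Q ∈ U) :
    IsOpen[slimTop L U] (Nset L U φ Q) :=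
  TopologicalSpace.GenerateOpen.basic _ (Or.inl ⟨φ, Q, hQ, rfl⟩)

theorem mem_Nset_self (φ : L → ℝ) (Q : Set L) :
    (Sum.inr (φ : Germ (U : Filter L) ℝ) : RL L U) ∈ Nset L U φ Q :=
  Or.inr rfl

theorem Nset_subset_iff {φ : L → ℝ} {Q : Set L} {S : Set (RL L U)} :
    Nset L U φ Q ⊆ S ↔
      Sum.inr (φ : Germ (U : Filter L) ℝ) ∈ S ∧ ∀ l ∈ Q, (Sum.inl (l, φ l) : RL L U) ∈ S := by
  constructor
  · intro h
    exact ⟨h (mem_Nset_self φ Q), fun l hl => h (Or.inl ⟨_, ⟨l, hl, rfl⟩, rfl⟩)⟩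
  · rintro ⟨hφ, hQ⟩ y (⟨_, ⟨l, hl, rfl⟩, rfl⟩ | rfl)
    exacts [hQ l hl, hφ]

theorem slimTop_le {τ : TopologicalSpace (RL L U)}
    (hlim : ∀ φ : L → ℝ,
      Tendsto (fun l => (Sum.inl (l, φ l) : RL L U)) (U : Filter L)
        (@nhds (RL L U) τ (Sum.inr (φ : Germ (U : Filter L) ℝ)))) :
    slimTop L U ≤ τ := by
  rw [TopologicalSpace.le_def]
  intro S hS
  rw [@isOpen_iff_forall_mem_open _ (slimTop L U)]
  rintro (p | g) hx
  · refine ⟨Sum.inl '' {p}, ?_, isOpen_slimTop_image_inl _, mem_image_of_mem _ rfl⟩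
    rintro _ ⟨_, rfl, rfl⟩
    exact hx
  · induction g using Germ.inductionOn with
    | h φ =>
      have hQ : {l | (Sum.inl (l, φ l) : RL L U) ∈ S} ∈ U := hlim φ (hS.mem_nhds hx)
      exact ⟨_, Nset_subset_iff.2 ⟨hx, fun _ hl => hl⟩, isOpen_slimTop_Nset φ hQ,
        mem_Nset_self φ _⟩

end

theorem stmt13
    (τ : TopologicalSpace (RL L U))
    (hlim : ∀ φ : L → ℝ,
      Filter.Tendsto (fun l => (Sum.inl (l, φ l) : RL L U)) (U : Filter L)
        (@nhds (RL L U) τ (Sum.inr (φ : Filter.Germ (U : Filter L) ℝ)))) :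
    ∀ S : Set (RL L U), @IsOpen (RL L U) τ S → @IsOpen (RL L U) (slimTop L U) S :=
  TopologicalSpace.le_def.1 (slimTop_le hlim)
end

section
/- A topology τ making (L × ℝ) ⊎ ℝ^L/U an (L,U)-completion of ℝ equals the slim topology τ_U if and only if for every B ⊆ L × ℝ, the τ-closure of B equals B ∪ {[φ]_U : there exists A ∈ U with (λ, φ(λ)) ∈ B for all λ ∈ A}. -/
open Filter Set

variable (L : Type) (U : Ultrafilter L)

/-!
In the slim topology a set `O` is open iff, whenever it contains `[φ]_U`, it contains
`(λ, φ(λ))` for `U`-almost every `λ`; from this the closure of `B ⊆ L × ℝ` is computed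
directly. Conversely, if `τ` has the stated closures, then the complement of every basic slim
set is such a closure: `(N_{φ,Q})ᶜ` is the closure of the complement of the graph of `φ` over
`Q`, and, `U` being free, `{(λ, r)}ᶜ` is the closure of `(L × ℝ) \ {(λ, r)}`. So `τ` is finer
than `τ_U`, and it is coarser because `(λ, φ(λ)) → [φ]_U` in `τ`.
-/

open Topology

section SlimTopology

variable {L U}

@[elab_as_elim]
lemma RL.induction {P : RL L U → Prop} (inl : ∀ p, P (.inl p))
    (inr : ∀ φ : L → ℝ, P (.inr (φ : Germ (U : Filter L) ℝ))) (x : RL L U) : P x := by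
  rcases x with p | g
  · exact inl p
  · exact g.inductionOn inr

lemma germ_ne_iff {φ ψ : L → ℝ} :
    (φ : Germ (U : Filter L) ℝ) ≠ ψ ↔ ∀ᶠ l in (U : Filter L), φ l ≠ ψ l := by
  rw [Ne, Germ.coe_eq, EventuallyEq, ← Ultrafilter.eventually_not]

lemma compl_singleton_mem_of_ne_pure (hfree : ∀ x : L, (U : Filter L) ≠ pure x) (x : L) :
    {x}ᶜ ∈ U :=
  Ultrafilter.compl_mem_iff_notMem.2 fun hx => hfree x (U.neBot.le_pure_iff.1 (le_pure_iff.2 hx))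

lemma inl_mem_Nset {φ : L → ℝ} {Q : Set L} {p : L × ℝ} :
    (.inl p : RL L U) ∈ Nset L U φ Q ↔ p ∈ (fun l => (l, φ l)) '' Q := by
  refine ⟨?_, fun h => Or.inl ⟨p, h, rfl⟩⟩
  rintro (⟨q, hq, h⟩ | h)
  exacts [Sum.inl_injective h ▸ hq, (Sum.inl_ne_inr h).elim]

lemma inr_mem_Nset {φ ψ : L → ℝ} {Q : Set L} :
    (.inr (ψ : Germ (U : Filter L) ℝ) : RL L U) ∈ Nset L U φ Q ↔
      (ψ : Germ (U : Filter L) ℝ) = φ := by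
  refine ⟨?_, fun h => Or.inr (congrArg Sum.inr h)⟩
  rintro (⟨q, -, h⟩ | h)
  exacts [(Sum.inl_ne_inr h).elim, Sum.inr_injective h]

variable (U) in
def slimClosure (B : Set (L × ℝ)) : Set (RL L U) :=
  (Sum.inl '' B) ∪
    {x : RL L U | ∃ φ : L → ℝ,
      x = Sum.inr (φ : Germ (U : Filter L) ℝ) ∧ ∃ A ∈ U, ∀ l ∈ A, (l, φ l) ∈ B}

lemma inl_mem_slimClosure {B : Set (L × ℝ)} {p : L × ℝ} :
    (.inl p : RL L U) ∈ slimClosure U B ↔ p ∈ B := by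
  refine ⟨?_, fun h => Or.inl ⟨p, h, rfl⟩⟩
  rintro (⟨q, hq, h⟩ | ⟨φ, h, -⟩)
  exacts [Sum.inl_injective h ▸ hq, (Sum.inl_ne_inr h).elim]

lemma inr_mem_slimClosure {B : Set (L × ℝ)} {φ : L → ℝ} :
    (.inr (φ : Germ (U : Filter L) ℝ) : RL L U) ∈ slimClosure U B ↔
      ∀ᶠ l in (U : Filter L), (l, φ l) ∈ B := by
  constructor
  · rintro (⟨p, -, h⟩ | ⟨ψ, h, A, hA, hAB⟩)
    · exact absurd h Sum.inl_ne_inr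
    · filter_upwards [Germ.coe_eq.1 (Sum.inr_injective h), hA] with l hφψ hl
      rw [hφψ]
      exact hAB l hl
  · exact fun h => Or.inr ⟨φ, rfl, _, h, fun l hl => hl⟩

lemma tendsto_nhds_slimTop (φ : L → ℝ) :
    Tendsto (fun l => (.inl (l, φ l) : RL L U)) (U : Filter L)
      (@nhds _ (slimTop L U) (.inr (φ : Germ (U : Filter L) ℝ))) := by
  refine TopologicalSpace.tendsto_nhds_generateFrom_iff.2 ?_
  rintro s (⟨ψ, Q, hQ, rfl⟩ | ⟨A, rfl⟩) hs
  · filter_upwards [Germ.coe_eq.1 (inr_mem_Nset.1 hs), hQ] with l hφψ hl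
    exact inl_mem_Nset.2 ⟨l, hl, by rw [hφψ]⟩
  · obtain ⟨q, -, h⟩ := hs
    exact (Sum.inl_ne_inr h).elim

lemma isOpen_slimTop_iff {O : Set (RL L U)} :
    IsOpen[slimTop L U] O ↔
      ∀ φ : L → ℝ, .inr (φ : Germ (U : Filter L) ℝ) ∈ O →
        ∀ᶠ l in (U : Filter L), .inl (l, φ l) ∈ O := by
  let := slimTop L U
  refine ⟨fun hO φ hφ => tendsto_nhds_slimTop φ (hO.mem_nhds hφ), fun hO => ?_⟩
  refine isOpen_iff_forall_mem_open.2 fun x hx => ?_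
  induction x using RL.induction with
  | inl p =>
    refine ⟨Sum.inl '' {p}, ?_, ?_, ⟨p, rfl, rfl⟩⟩
    · rintro _ ⟨q, rfl, rfl⟩
      exact hx
    · exact TopologicalSpace.isOpen_generateFrom_of_mem (Or.inr ⟨{p}, rfl⟩)
  | inr φ =>
    refine ⟨Nset L U φ {l | .inl (l, φ l) ∈ O}, ?_, ?_, Or.inr rfl⟩
    · rintro y (⟨-, ⟨l, hl, rfl⟩, rfl⟩ | rfl)
      exacts [hl, hx]
    · exact TopologicalSpace.isOpen_generateFrom_of_mem (Or.inl ⟨φ, _, hO φ hx, rfl⟩)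

lemma closure_slimTop_image_inl (B : Set (L × ℝ)) :
    closure[slimTop L U] (Sum.inl '' B) = slimClosure U B := by
  let := slimTop L U
  refine subset_antisymm (closure_minimal subset_union_left ?_) fun x hx => ?_
  · rw [← isOpen_compl_iff, isOpen_slimTop_iff]
    intro φ hφ
    filter_upwards [Ultrafilter.eventually_not.2 (mt inr_mem_slimClosure.2 hφ)] with l hl
    exact mt inl_mem_slimClosure.1 hl
  · induction x using RL.induction with
    | inl p => exact subset_closure ⟨p, inl_mem_slimClosure.1 hx, rfl⟩
    | inr φ =>
      exact mem_closure_of_tendsto (tendsto_nhds_slimTop φ)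
        ((inr_mem_slimClosure.1 hx).mono fun l hl => ⟨_, hl, rfl⟩)

lemma compl_Nset_eq_slimClosure {φ : L → ℝ} {Q : Set L} (hQ : Q ∈ U) :
    (Nset L U φ Q)ᶜ = slimClosure U ((fun l => (l, φ l)) '' Q)ᶜ := by
  ext x
  induction x using RL.induction with
  | inl p => exact (not_congr inl_mem_Nset).trans (inl_mem_slimClosure (B := _ᶜ)).symm
  | inr ψ =>
    refine (not_congr inr_mem_Nset).trans <| germ_ne_iff.trans <|
      Iff.trans ?_ inr_mem_slimClosure.symm
    have hgraph : ∀ l, (l, ψ l) ∈ (fun l => (l, φ l)) '' Q ↔ l ∈ Q ∧ ψ l = φ l := by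
      simp [eq_comm]
    simp only [mem_compl_iff, hgraph]
    refine ⟨fun h => h.mono fun l hl hmem => hl hmem.2, fun h => ?_⟩
    filter_upwards [h, hQ] with l hl hlQ
    exact fun he => hl ⟨hlQ, he⟩

lemma compl_singleton_inl_eq_slimClosure (hfree : ∀ x : L, (U : Filter L) ≠ pure x)
    (p : L × ℝ) : ({.inl p} : Set (RL L U))ᶜ = slimClosure U {p}ᶜ := by
  ext x
  induction x using RL.induction with
  | inl q =>
    exact (not_congr Sum.inl_injective.eq_iff).trans (inl_mem_slimClosure (B := {p}ᶜ)).symm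
  | inr φ =>
    refine iff_of_true Sum.inr_ne_inl (inr_mem_slimClosure.2 ?_)
    filter_upwards [compl_singleton_mem_of_ne_pure hfree p.1] with l hl hp
    exact hl (congrArg Prod.fst hp)

lemma eq_slimTop_of_closure_eq {τ : TopologicalSpace (RL L U)}
    (hfree : ∀ x : L, (U : Filter L) ≠ pure x)
    (hlim : ∀ φ : L → ℝ, Tendsto (fun l => (.inl (l, φ l) : RL L U)) (U : Filter L)
      (@nhds _ τ (.inr (φ : Germ (U : Filter L) ℝ))))
    (hclosure : ∀ B : Set (L × ℝ), closure[τ] (Sum.inl '' B) = slimClosure U B) :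
    τ = slimTop L U := by
  let := τ
  have isClosed_slimClosure (B : Set (L × ℝ)) : IsClosed (slimClosure U B) :=
    hclosure B ▸ isClosed_closure
  refine le_antisymm (le_generateFrom ?_) (TopologicalSpace.le_def.2 fun O hO =>
    isOpen_slimTop_iff.2 fun φ hφ => hlim φ (hO.mem_nhds hφ))
  rintro s (⟨φ, Q, hQ, rfl⟩ | ⟨A, rfl⟩)
  · refine isClosed_compl_iff.1 ?_
    rw [compl_Nset_eq_slimClosure hQ]
    exact isClosed_slimClosure _
  · refine isOpen_iff_forall_mem_open.2 ?_
    rintro _ ⟨p, hp, rfl⟩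
    refine ⟨{.inl p}, singleton_subset_iff.2 ⟨p, hp, rfl⟩, isClosed_compl_iff.1 ?_, rfl⟩
    rw [compl_singleton_inl_eq_slimClosure hfree]
    exact isClosed_slimClosure _

end SlimTopology

theorem stmt14 (hfree : ∀ x : L, (U : Filter L) ≠ pure x)
    (τ : TopologicalSpace (RL L U))
    (hlim : ∀ φ : L → ℝ,
      Filter.Tendsto (fun l => (Sum.inl (l, φ l) : RL L U)) (U : Filter L)
        (@nhds (RL L U) τ (Sum.inr (φ : Filter.Germ (U : Filter L) ℝ)))) :
    τ = slimTop L U ↔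
      ∀ B : Set (L × ℝ),
        @closure (RL L U) τ (Sum.inl '' B) =
          (Sum.inl '' B) ∪
            {x : RL L U | ∃ φ : L → ℝ,
              x = Sum.inr (φ : Filter.Germ (U : Filter L) ℝ) ∧
              ∃ A ∈ U, ∀ l ∈ A, (l, φ l) ∈ B} :=
  ⟨fun h => h ▸ closure_slimTop_image_inl, eq_slimTop_of_closure_eq hfree hlim⟩
end
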